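/- arXiv:1903.04991 — 2 statements merged into one kernel-verified Lean document; each statement's English description precedes it below -/
import Mathlib

section
/- Let f(W₁,...,W_K; x) be a function of K weight matrices that is positively one-homogeneous separately in each W_k. Then the maximum margin problem max over (W₁,...,W_K) with ‖W_k‖ = 1 for all k, of min over n of y_n f(W₁,...,W_K; x_n), has value strictly positive if and only if the minimum norm problem min (1/2)Σ_k ‖W_k‖² subject to y_n f(W₁,...,W_K; x_n) ≥ 1 for all n is feasible; moreover the optimizers correspond under rescaling: (W₁*,...,W_K*) maximizes the margin with margin η > 0 if and only if (W₁*/η^{1/K}, ..., W_K*/η^{1/K}) is a minimum norm solution (in the case of equal layer norms). -/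
open Finset

/-!
Scaling layer `k` by `c k > 0` multiplies `f`, hence the margin, by `∏ k, c k`. So a feasible `W`
normalized layerwise has margin at least `(∏ k, ‖W k‖)⁻¹`, and scaling a unit-norm `W` of margin
`η > 0` by `η ^ (-1/K)` in every layer makes it feasible with `∑ k, ‖W k‖ ^ 2 = K η ^ (-2/K)`.
By AM-GM, `∑ k, ‖W k‖ ^ 2 ≥ K (∏ k, ‖W k‖) ^ (2/K)`, with equality for equal layer norms, so
small norm at margin one and large margin at unit norm are the same requirement.
-/

theorem card_mul_sq_le_sum_sq {ι : Type*} [Fintype ι] {a : ι → ℝ} {c : ℝ} (hc : 0 ≤ c)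
    (h : c ^ Fintype.card ι ≤ ∏ k, a k) : Fintype.card ι * c ^ 2 ≤ ∑ k, a k ^ 2 := by
  rcases Nat.eq_zero_or_pos (Fintype.card ι) with hK | hK
  · simpa [hK] using sum_nonneg fun k _ => sq_nonneg (a k)
  have amgm := Real.geom_mean_le_arith_mean univ (fun _ => 1) (fun k => a k ^ 2)
    (fun _ _ => zero_le_one) (by simpa using hK) (fun k _ => sq_nonneg (a k))
  simp only [Real.rpow_one, sum_const, card_univ, nsmul_eq_mul, mul_one, one_mul] at amgm
  have hpow : (c ^ 2) ^ Fintype.card ι ≤ ∏ k, a k ^ 2 := by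
    rw [← pow_mul, mul_comm, pow_mul, prod_pow]
    exact pow_le_pow_left₀ (by positivity) h 2
  calc (Fintype.card ι : ℝ) * c ^ 2
      = Fintype.card ι * ((c ^ 2) ^ Fintype.card ι) ^ (Fintype.card ι : ℝ)⁻¹ := by
        rw [Real.pow_rpow_inv_natCast (by positivity) hK.ne']
    _ ≤ Fintype.card ι * ((∑ k, a k ^ 2) / Fintype.card ι) := by
        gcongr
        exact (Real.rpow_le_rpow (by positivity) hpow (by positivity)).trans amgm
    _ = ∑ k, a k ^ 2 := by field_simp

theorem inv_rpow_one_div_pow {t : ℝ} (ht : 0 ≤ t) {K : ℕ} (hK : K ≠ 0) :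
    ((t ^ ((1 : ℝ) / K))⁻¹) ^ K = t⁻¹ := by
  rw [inv_pow, one_div, Real.rpow_inv_natCast_pow ht hK]

section

variable {ι E X ν : Type*}

noncomputable def margin (f : (ι → E) → X → ℝ) (x : ν → X) (y : ν → ℝ) (W : ι → E) : ℝ :=
  ⨅ n, y n * f W (x n)

theorem margin_le [Finite ν] (f : (ι → E) → X → ℝ) (x : ν → X) (y : ν → ℝ) (W : ι → E)
    (n : ν) : margin f x y W ≤ y n * f W (x n) :=
  ciInf_le (Set.finite_range _).bddBelow n

theorem le_margin_iff [Finite ν] [Nonempty ν] {f : (ι → E) → X → ℝ} {x : ν → X} {y : ν → ℝ}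
    {W : ι → E} {a : ℝ} : a ≤ margin f x y W ↔ ∀ n, a ≤ y n * f W (x n) :=
  le_ciInf_iff (Set.finite_range _).bddBelow

variable [NormedAddCommGroup E] [NormedSpace ℝ E]

def IsLayerHomogeneous [DecidableEq ι] (f : (ι → E) → X → ℝ) : Prop :=
  ∀ (W : ι → E) (k : ι) (α : ℝ), 0 < α → ∀ x, f (Function.update W k (α • W k)) x = α * f W x

theorem sum_norm_smul_sq_of_norm_eq_one [Fintype ι] {V : ι → E} (hV : ∀ k, ‖V k‖ = 1) (a : ℝ) :
    ∑ k, ‖a • V k‖ ^ 2 = Fintype.card ι * a ^ 2 := by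
  simp [norm_smul, hV]

namespace IsLayerHomogeneous

variable [DecidableEq ι] {f : (ι → E) → X → ℝ} (hf : IsLayerHomogeneous f)
include hf

theorem apply_eq_zero_of_eq_zero {W : ι → E} {k : ι} (hk : W k = 0) (x : X) : f W x = 0 := by
  have h := hf W k 2 two_pos x
  rw [hk, smul_zero, ← hk, Function.update_eq_self] at h
  linarith

theorem ne_zero_of_one_le_margin [Finite ν] [Nonempty ν] {x : ν → X} {y : ν → ℝ} {W : ι → E}
    (hW : 1 ≤ margin f x y W) (k : ι) : W k ≠ 0 := by
  intro hk
  obtain ⟨n⟩ := ‹Nonempty ν›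
  have h := hW.trans (margin_le f x y W n)
  rw [hf.apply_eq_zero_of_eq_zero hk, mul_zero] at h
  linarith

variable [Fintype ι]

theorem apply_smul_layers {c : ι → ℝ} (hc : ∀ k, 0 < c k) (W : ι → E) (x : X) :
    f (fun k => c k • W k) x = (∏ k, c k) * f W x := by
  have partial_scaling : ∀ s : Finset ι,
      f (s.piecewise (fun k => c k • W k) W) x = (∏ k ∈ s, c k) * f W x := by
    intro s
    induction s using Finset.induction_on with
    | empty => simp
    | insert a s ha ih =>
      have hWa : s.piecewise (fun k => c k • W k) W a = W a := piecewise_eq_of_notMem _ _ _ ha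
      rw [piecewise_insert, ← hWa, hf _ a _ (hc a), ih, prod_insert ha, mul_assoc]
  simpa using partial_scaling univ

theorem margin_smul_layers {c : ι → ℝ} (hc : ∀ k, 0 < c k) (x : ν → X) (y : ν → ℝ)
    (W : ι → E) : margin f x y (fun k => c k • W k) = (∏ k, c k) * margin f x y W := by
  simp only [margin, hf.apply_smul_layers hc, mul_left_comm (y _),
    Real.mul_iInf_of_nonneg (prod_nonneg fun k _ => (hc k).le)]

theorem margin_smul {c : ℝ} (hc : 0 < c) (x : ν → X) (y : ν → ℝ) (W : ι → E) :
    margin f x y (fun k => c • W k) = c ^ Fintype.card ι * margin f x y W := by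
  simpa using hf.margin_smul_layers (fun _ => hc) x y W

theorem margin_normalize {W : ι → E} (hW : ∀ k, W k ≠ 0) (x : ν → X) (y : ν → ℝ) :
    margin f x y (fun k => ‖W k‖⁻¹ • W k) = (∏ k, ‖W k‖)⁻¹ * margin f x y W := by
  rw [hf.margin_smul_layers (fun k => inv_pos.2 (norm_pos_iff.2 (hW k))), prod_inv_distrib]

theorem margin_rescale_eq_one (hK : Fintype.card ι ≠ 0) {x : ν → X} {y : ν → ℝ} {W : ι → E}
    (hW : 0 < margin f x y W) :
    margin f x y (fun k => (margin f x y W ^ ((1 : ℝ) / Fintype.card ι))⁻¹ • W k) = 1 := by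
  rw [hf.margin_smul (inv_pos.2 (Real.rpow_pos_of_pos hW _)), inv_rpow_one_div_pow hW.le hK,
    inv_mul_cancel₀ hW.ne']

theorem margin_le_of_sum_norm_sq_le (hK : Fintype.card ι ≠ 0) {x : ν → X} {y : ν → ℝ} {η : ℝ}
    (hη : 0 < η)
    (hmin : ∀ W : ι → E, 1 ≤ margin f x y W →
      Fintype.card ι * ((η ^ ((1 : ℝ) / Fintype.card ι))⁻¹) ^ 2 ≤ ∑ k, ‖W k‖ ^ 2)
    {V : ι → E} (hV : ∀ k, ‖V k‖ = 1) : margin f x y V ≤ η := by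
  by_contra! hlt
  have hμ : 0 < margin f x y V := hη.trans hlt
  have hrescaled := hmin _ (hf.margin_rescale_eq_one hK hμ).ge
  rw [sum_norm_smul_sq_of_norm_eq_one hV] at hrescaled
  have hscale : (margin f x y V ^ ((1 : ℝ) / Fintype.card ι))⁻¹ <
      (η ^ ((1 : ℝ) / Fintype.card ι))⁻¹ :=
    (inv_lt_inv₀ (Real.rpow_pos_of_pos hμ _) (Real.rpow_pos_of_pos hη _)).2
      (Real.rpow_lt_rpow hη.le hlt (by positivity))
  have hKR : (0 : ℝ) < Fintype.card ι := by exact_mod_cast Nat.pos_of_ne_zero hK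
  have := mul_lt_mul_of_pos_left
    (pow_lt_pow_left₀ hscale (inv_nonneg.2 (Real.rpow_nonneg hμ.le _)) two_ne_zero) hKR
  linarith

variable [Finite ν] [Nonempty ν]

theorem exists_norm_eq_one_margin_pos_iff (hK : Fintype.card ι ≠ 0) (x : ν → X) (y : ν → ℝ) :
    (∃ W : ι → E, (∀ k, ‖W k‖ = 1) ∧ 0 < margin f x y W) ↔ ∃ W : ι → E, 1 ≤ margin f x y W := by
  constructor
  · rintro ⟨W, -, hW⟩
    exact ⟨_, (hf.margin_rescale_eq_one hK hW).ge⟩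
  · rintro ⟨W, hW⟩
    have hW0 := hf.ne_zero_of_one_le_margin hW
    refine ⟨fun k => ‖W k‖⁻¹ • W k, fun k => norm_smul_inv_norm (𝕜 := ℝ) (hW0 k), ?_⟩
    rw [hf.margin_normalize hW0]
    exact mul_pos (inv_pos.2 (prod_pos fun k _ => norm_pos_iff.2 (hW0 k))) (by linarith)

/-- The normalized layers of a feasible `W` witness `(∏ k, ‖W k‖)⁻¹ ≤ η`; AM-GM then bounds
`∑ k, ‖W k‖ ^ 2` from below. -/
theorem card_mul_sq_le_sum_norm_sq (hK : Fintype.card ι ≠ 0) {x : ν → X} {y : ν → ℝ} {η : ℝ}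
    (hη : 0 < η) (hmax : ∀ V : ι → E, (∀ k, ‖V k‖ = 1) → margin f x y V ≤ η) {W : ι → E}
    (hW : 1 ≤ margin f x y W) :
    Fintype.card ι * ((η ^ ((1 : ℝ) / Fintype.card ι))⁻¹) ^ 2 ≤ ∑ k, ‖W k‖ ^ 2 := by
  have hW0 := hf.ne_zero_of_one_le_margin hW
  have hP : 0 < ∏ k, ‖W k‖ := prod_pos fun k _ => norm_pos_iff.2 (hW0 k)
  have hPη : (∏ k, ‖W k‖)⁻¹ ≤ η :=
    calc (∏ k, ‖W k‖)⁻¹ ≤ (∏ k, ‖W k‖)⁻¹ * margin f x y W :=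
          le_mul_of_one_le_right (inv_nonneg.2 hP.le) hW
      _ = margin f x y (fun k => ‖W k‖⁻¹ • W k) := (hf.margin_normalize hW0 x y).symm
      _ ≤ η := hmax _ fun k => norm_smul_inv_norm (𝕜 := ℝ) (hW0 k)
  refine card_mul_sq_le_sum_sq (inv_nonneg.2 (Real.rpow_nonneg hη.le _)) ?_
  rw [inv_rpow_one_div_pow hη.le hK]
  exact (inv_le_comm₀ hP hη).1 hPη

theorem forall_margin_le_iff (hK : Fintype.card ι ≠ 0) {x : ν → X} {y : ν → ℝ} {W : ι → E}
    (hunit : ∀ k, ‖W k‖ = 1) (hpos : 0 < margin f x y W) :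
    (∀ V : ι → E, (∀ k, ‖V k‖ = 1) → margin f x y V ≤ margin f x y W) ↔
      1 ≤ margin f x y (fun k => (margin f x y W ^ ((1 : ℝ) / Fintype.card ι))⁻¹ • W k) ∧
      ∀ V : ι → E, 1 ≤ margin f x y V →
        ∑ k, ‖(margin f x y W ^ ((1 : ℝ) / Fintype.card ι))⁻¹ • W k‖ ^ 2 ≤ ∑ k, ‖V k‖ ^ 2 := by
  rw [sum_norm_smul_sq_of_norm_eq_one hunit]
  exact ⟨fun hmax => ⟨(hf.margin_rescale_eq_one hK hpos).ge,
      fun V hV => hf.card_mul_sq_le_sum_norm_sq hK hpos hmax hV⟩,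
    fun ⟨_, hmin⟩ V hV => hf.margin_le_of_sum_norm_sq_le hK hpos hmin hV⟩

end IsLayerHomogeneous

end

theorem max_margin_min_norm_equivalence_general {d K N : ℕ} [NeZero N] (hK : 0 < K)
    {X : Type*}
    (f : (Fin K → EuclideanSpace ℝ (Fin d)) → X → ℝ)
    (hhom : ∀ (W : Fin K → EuclideanSpace ℝ (Fin d)) (k : Fin K) (α : ℝ),
      0 < α → ∀ x, f (Function.update W k (α • W k)) x = α * f W x)
    (x : Fin N → X) (y : Fin N → ℝ) :
    -- (a) positive max-margin value iff the min-norm problem is feasible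
    ((∃ W : Fin K → EuclideanSpace ℝ (Fin d), (∀ k, ‖W k‖ = 1) ∧
        0 < ⨅ n, y n * f W (x n)) ↔
      (∃ W : Fin K → EuclideanSpace ℝ (Fin d), ∀ n, 1 ≤ y n * f W (x n))) ∧
    -- (b) correspondence of optimizers under rescaling
    (∀ (Wstar : Fin K → EuclideanSpace ℝ (Fin d)) (η : ℝ),
      (∀ k, ‖Wstar k‖ = 1) → η = ⨅ n, y n * f Wstar (x n) → 0 < η →
      ((∀ W : Fin K → EuclideanSpace ℝ (Fin d), (∀ k, ‖W k‖ = 1) →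
          (⨅ n, y n * f W (x n)) ≤ η) ↔
        ((∀ n, 1 ≤ y n * f (fun k => (η ^ ((1 : ℝ) / K))⁻¹ • Wstar k) (x n)) ∧
          ∀ W : Fin K → EuclideanSpace ℝ (Fin d),
            (∀ n, 1 ≤ y n * f W (x n)) →
            (1 / 2) * ∑ k, ‖(η ^ ((1 : ℝ) / K))⁻¹ • Wstar k‖ ^ 2 ≤
              (1 / 2) * ∑ k, ‖W k‖ ^ 2))) := by
  have hf : IsLayerHomogeneous f := hhom
  have hcard : Fintype.card (Fin K) ≠ 0 := by simpa using hK.ne'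
  simp only [← le_margin_iff, mul_le_mul_iff_right₀ (one_half_pos : (0 : ℝ) < 1 / 2)]
  refine ⟨hf.exists_norm_eq_one_margin_pos_iff hcard x y, ?_⟩
  rintro Wstar η hunit rfl hpos
  have h := hf.forall_margin_le_iff hcard hunit hpos
  rw [Fintype.card_fin] at h
  exact h

/-- Equivalence of the maximum margin problem under unit layer-norm constraints
and the minimum norm problem under margin constraints, for a function that is
positively one-homogeneous in each layer. -/
theorem max_margin_min_norm_equivalence {d K N : ℕ} [NeZero N] (hK : 0 < K)
    {X : Type*}
    (f : (Fin K → EuclideanSpace ℝ (Fin d)) → X → ℝ)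
    (hhom : ∀ (W : Fin K → EuclideanSpace ℝ (Fin d)) (k : Fin K) (α : ℝ),
      0 < α → ∀ x, f (Function.update W k (α • W k)) x = α * f W x)
    (x : Fin N → X) (y : Fin N → ℝ) (hy : ∀ n, y n = 1 ∨ y n = -1) :
    -- (a) positive max-margin value iff the min-norm problem is feasible
    ((∃ W : Fin K → EuclideanSpace ℝ (Fin d), (∀ k, ‖W k‖ = 1) ∧
        0 < ⨅ n, y n * f W (x n)) ↔
      (∃ W : Fin K → EuclideanSpace ℝ (Fin d), ∀ n, 1 ≤ y n * f W (x n))) ∧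
    -- (b) correspondence of optimizers under rescaling
    (∀ (Wstar : Fin K → EuclideanSpace ℝ (Fin d)) (η : ℝ),
      (∀ k, ‖Wstar k‖ = 1) → η = ⨅ n, y n * f Wstar (x n) → 0 < η →
      ((∀ W : Fin K → EuclideanSpace ℝ (Fin d), (∀ k, ‖W k‖ = 1) →
          (⨅ n, y n * f W (x n)) ≤ η) ↔
        ((∀ n, 1 ≤ y n * f (fun k => (η ^ ((1 : ℝ) / K))⁻¹ • Wstar k) (x n)) ∧
          ∀ W : Fin K → EuclideanSpace ℝ (Fin d),
            (∀ n, 1 ≤ y n * f W (x n)) →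
            (1 / 2) * ∑ k, ‖(η ^ ((1 : ℝ) / K))⁻¹ • Wstar k‖ ^ 2 ≤
              (1 / 2) * ∑ k, ‖W k‖ ^ 2))) :=
  max_margin_min_norm_equivalence_general hK f hhom x y
end

section
/- Let f(W₁,...,W_K; x) be differentiable and positively one-homogeneous in each layer's weights. Under the gradient flow W_k'(t) = −∂L/∂W_k with L(W) = Σ_n exp(−y_n f(W; x_n)), the quantity d/dt ‖W_k(t)‖²_F = 2 Σ_n y_n f(W(t); x_n) exp(−y_n f(W(t); x_n)) is the same for all layers k = 1,...,K. Consequently ‖W_k(t)‖²_F − ‖W_j(t)‖²_F is constant in time for all k, j. -/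
open Finset

/-! For a function positively one-homogeneous in the layer `W_k`, Euler's identity gives
`⟨W_k, ∂f/∂W_k⟩ = f`. Pairing the gradient flow equation with `W_k` therefore turns
`d/dt ‖W_k‖²` into `-2 ⟨W_k, ∂L/∂W_k⟩ = 2 ∑ₙ yₙ f e^{-yₙ f}`, which does not depend on `k`;
so the difference of two squared layer norms has zero derivative. -/

theorem fderiv_apply_self_of_pos_homogeneous {E : Type*} [NormedAddCommGroup E] [NormedSpace ℝ E]
    {g : E → ℝ} {w : E} (hd : DifferentiableAt ℝ g w)
    (hhom : ∀ α : ℝ, 0 < α → g (α • w) = α * g w) :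
    fderiv ℝ g w w = g w := by
  have hray : HasDerivAt (fun α : ℝ => g (α • w)) (fderiv ℝ g w w) 1 := by
    have hd' : HasFDerivAt g (fderiv ℝ g w) ((1 : ℝ) • w) := by simpa using hd.hasFDerivAt
    simpa [Function.comp_def] using
      hd'.comp_hasDerivAt (1 : ℝ) ((hasDerivAt_id (1 : ℝ)).smul_const w)
  have hlin : HasDerivAt (fun α : ℝ => g (α • w)) (g w) 1 := by
    have heq : (fun α : ℝ => g (α • w)) =ᶠ[nhds 1] fun α => α * g w := by
      filter_upwards [Ioi_mem_nhds one_pos] with α hα using hhom α hα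
    exact HasDerivAt.congr_of_eventuallyEq
      (by simpa using (hasDerivAt_id (1 : ℝ)).mul_const (g w)) heq
  exact hray.unique hlin

theorem fderiv_expLoss_apply_self {E ι : Type*} [NormedAddCommGroup E] [NormedSpace ℝ E]
    (s : Finset ι) {g : ι → E → ℝ} (y : ι → ℝ) {w : E}
    (hd : ∀ n, DifferentiableAt ℝ (g n) w)
    (hhom : ∀ n, ∀ α : ℝ, 0 < α → g n (α • w) = α * g n w) :
    fderiv ℝ (fun u => ∑ n ∈ s, Real.exp (-(y n * g n u))) w w
      = -∑ n ∈ s, y n * g n w * Real.exp (-(y n * g n w)) := by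
  have hterm : ∀ n, HasFDerivAt (fun u => Real.exp (-(y n * g n u)))
      (Real.exp (-(y n * g n w)) • -(y n • fderiv ℝ (g n) w)) w :=
    fun n => (((hd n).hasFDerivAt.const_mul (y n)).neg).exp
  rw [(HasFDerivAt.fun_sum fun n _ => hterm n).fderiv, _root_.sum_apply, ← Finset.sum_neg_distrib]
  refine Finset.sum_congr rfl fun n _ => ?_
  simp only [smul_neg, neg_apply, smul_apply, smul_eq_mul,
    fderiv_apply_self_of_pos_homogeneous (hd n) (hhom n)]
  ring

theorem hasDerivAt_norm_sq_of_hasDerivAt_neg_gradient {E : Type*} [NormedAddCommGroup E]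
    [InnerProductSpace ℝ E] [CompleteSpace E] {h : E → ℝ} {w : ℝ → E} {t : ℝ}
    (hw : HasDerivAt w (-gradient h (w t)) t) :
    HasDerivAt (fun s => ‖w s‖ ^ 2) (-(2 * fderiv ℝ h (w t) (w t))) t := by
  have hpair : inner ℝ (w t) (gradient h (w t)) = fderiv ℝ h (w t) (w t) := by
    rw [real_inner_comm, gradient, InnerProductSpace.toDual_symm_apply]
  have hinner := hw.inner ℝ hw
  rw [inner_neg_left, inner_neg_right, real_inner_comm (w t) (gradient h (w t)), hpair] at hinner
  simp only [real_inner_self_eq_norm_sq] at hinner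
  exact hinner.congr_deriv (by ring)

theorem layer_norms_grow_at_same_rate_general {d K N : ℕ} {X : Type*}
    (f : (Fin K → EuclideanSpace ℝ (Fin d)) → X → ℝ)
    (hhom : ∀ (W : Fin K → EuclideanSpace ℝ (Fin d)) (k : Fin K) (α : ℝ),
      0 < α → ∀ x, f (Function.update W k (α • W k)) x = α * f W x)
    (hdiff : ∀ (W : Fin K → EuclideanSpace ℝ (Fin d)) (k : Fin K) (x : X),
      DifferentiableAt ℝ (fun u => f (Function.update W k u) x) (W k))
    (x : Fin N → X) (y : Fin N → ℝ)
    (L : (Fin K → EuclideanSpace ℝ (Fin d)) → ℝ)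
    (hL : L = fun W => ∑ n, Real.exp (-(y n * f W (x n))))
    (W : ℝ → Fin K → EuclideanSpace ℝ (Fin d))
    (hflow : ∀ (k : Fin K) (t : ℝ),
      HasDerivAt (fun s => W s k)
        (-(gradient (fun u => L (Function.update (W t) k u)) (W t k))) t) :
    (∀ (k : Fin K) (t : ℝ),
      HasDerivAt (fun s => ‖W s k‖ ^ 2)
        (2 * ∑ n, y n * f (W t) (x n) * Real.exp (-(y n * f (W t) (x n)))) t) ∧
    (∀ (k j : Fin K) (t : ℝ),
      ‖W t k‖ ^ 2 - ‖W t j‖ ^ 2 = ‖W 0 k‖ ^ 2 - ‖W 0 j‖ ^ 2) := by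
  have rate : ∀ k t, HasDerivAt (fun s => ‖W s k‖ ^ 2)
      (2 * ∑ n, y n * f (W t) (x n) * Real.exp (-(y n * f (W t) (x n)))) t := by
    intro k t
    have hrate := hasDerivAt_norm_sq_of_hasDerivAt_neg_gradient (hflow k t)
    rw [hL, fderiv_expLoss_apply_self _ y (fun n => hdiff (W t) k (x n)) fun n α hα => by
      rw [Function.update_eq_self]; exact hhom (W t) k α hα (x n)] at hrate
    simpa only [Function.update_eq_self, neg_mul_eq_mul_neg, neg_neg] using hrate
  refine ⟨rate, fun k j t => ?_⟩
  have hconst : ∀ s, HasDerivAt (fun u => ‖W u k‖ ^ 2 - ‖W u j‖ ^ 2) 0 s := fun s => by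
    simpa [Pi.sub_def] using (rate k s).sub (rate j s)
  exact is_const_of_deriv_eq_zero (fun s => (hconst s).differentiableAt)
    (fun s => (hconst s).deriv) t 0

/-- Under the gradient flow of the exponential loss, the squared Frobenius norm
of each layer grows at the same rate `2 ∑ₙ yₙ f e^{−yₙ f}`, so differences of
squared layer norms are conserved. -/
theorem layer_norms_grow_at_same_rate {d K N : ℕ} {X : Type*}
    (f : (Fin K → EuclideanSpace ℝ (Fin d)) → X → ℝ)
    (hhom : ∀ (W : Fin K → EuclideanSpace ℝ (Fin d)) (k : Fin K) (α : ℝ),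
      0 < α → ∀ x, f (Function.update W k (α • W k)) x = α * f W x)
    (hdiff : ∀ (W : Fin K → EuclideanSpace ℝ (Fin d)) (k : Fin K) (x : X),
      DifferentiableAt ℝ (fun u => f (Function.update W k u) x) (W k))
    (x : Fin N → X) (y : Fin N → ℝ) (hy : ∀ n, y n = 1 ∨ y n = -1)
    (L : (Fin K → EuclideanSpace ℝ (Fin d)) → ℝ)
    (hL : L = fun W => ∑ n, Real.exp (-(y n * f W (x n))))
    (W : ℝ → Fin K → EuclideanSpace ℝ (Fin d))
    (hflow : ∀ (k : Fin K) (t : ℝ),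
      HasDerivAt (fun s => W s k)
        (-(gradient (fun u => L (Function.update (W t) k u)) (W t k))) t) :
    (∀ (k : Fin K) (t : ℝ),
      HasDerivAt (fun s => ‖W s k‖ ^ 2)
        (2 * ∑ n, y n * f (W t) (x n) * Real.exp (-(y n * f (W t) (x n)))) t) ∧
    (∀ (k j : Fin K) (t : ℝ),
      ‖W t k‖ ^ 2 - ‖W t j‖ ^ 2 = ‖W 0 k‖ ^ 2 - ‖W 0 j‖ ^ 2) :=
  layer_norms_grow_at_same_rate_general f hhom hdiff x y L hL W hflow
end
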